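/- arXiv:math/0512051 — 5 statements merged into one kernel-verified Lean document; each statement's English description precedes it below -/
import Mathlib

section
/- The Gray map φ: ℤ₄ⁿ → ℤ₂²ⁿ defined by φ(x) = (β(x), γ(x)) is an isometry from ℤ₄ⁿ with the Lee metric to ℤ₂²ⁿ with the Hamming metric; that is, for all x, y ∈ ℤ₄ⁿ, the Hamming distance between φ(x) and φ(y) equals the Lee distance between x and y. -/
/-!
Hamming distance is additive over coordinates, and the Gray map acts coordinatewise, sending one
ℤ₄ coordinate to two bits. So it suffices to check, over the sixteen pairs `a, b : ℤ₄`, that the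
number of bits in which `(β a, γ a)` and `(β b, γ b)` differ is the Lee weight of `a - b`.
-/

/-- Lee weight on ℤ₄: w_L(0)=0, w_L(1)=w_L(3)=1, w_L(2)=2. -/
def leeW : ZMod 4 → ℕ := fun a => if a = 0 then 0 else if a = 2 then 2 else 1

/-- Lee weight of a vector: sum of coordinate Lee weights. -/
def leeWt {ι : Type*} [Fintype ι] (x : ι → ZMod 4) : ℕ := ∑ i, leeW (x i)

/-- β component of the Gray map: β(0)=β(1)=0, β(2)=β(3)=1. -/
def grayβ : ZMod 4 → ZMod 2 := fun a => if a = 0 ∨ a = 1 then 0 else 1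

/-- γ component of the Gray map: γ(0)=γ(3)=0, γ(1)=γ(2)=1. -/
def grayγ : ZMod 4 → ZMod 2 := fun a => if a = 0 ∨ a = 3 then 0 else 1

/-- The Gray map φ(x) = (β(x), γ(x)), coded with index set ι ⊕ ι for ℤ₂²ⁿ. -/
def gray {ι : Type*} (x : ι → ZMod 4) : ι ⊕ ι → ZMod 2 :=
  Sum.elim (fun i => grayβ (x i)) (fun i => grayγ (x i))

theorem hammingDist_eq_sum_ite {ι : Type*} [Fintype ι] {β : ι → Type*}
    [∀ i, DecidableEq (β i)] (x y : ∀ i, β i) :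
    hammingDist x y = ∑ i, if x i ≠ y i then 1 else 0 :=
  Finset.card_filter _ _

theorem hammingDist_sumElim {ι κ α : Type*} [Fintype ι] [Fintype κ] [DecidableEq α]
    (f f' : ι → α) (g g' : κ → α) :
    hammingDist (Sum.elim f g) (Sum.elim f' g') = hammingDist f f' + hammingDist g g' := by
  simp only [hammingDist_eq_sum_ite, Fintype.sum_sum_type, Sum.elim_inl, Sum.elim_inr]
  rfl

theorem leeW_sub (a b : ZMod 4) :
    leeW (a - b) =
      (if grayβ a ≠ grayβ b then 1 else 0) + if grayγ a ≠ grayγ b then 1 else 0 := by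
  revert a b
  decide

theorem hammingDist_gray {ι : Type*} [Fintype ι] (x y : ι → ZMod 4) :
    hammingDist (gray x) (gray y) = leeWt (x - y) := by
  rw [gray, gray, hammingDist_sumElim, hammingDist_eq_sum_ite, hammingDist_eq_sum_ite,
    ← Finset.sum_add_distrib, leeWt]
  exact Finset.sum_congr rfl fun i _ => (leeW_sub (x i) (y i)).symm

/-- The Gray map is an isometry: Hamming distance of images equals Lee distance. -/
theorem gray_isometry {n : ℕ} (x y : Fin n → ZMod 4) :
    hammingDist (gray x) (gray y) = leeWt (x - y) :=
  hammingDist_gray x y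
end

section
/- For any x ∈ ℤ₄ⁿ, the Hamming weight of φ(x) equals the Lee weight of x. -/
lemma leeW_split (a : ZMod 4) :
    (if grayβ a ≠ 0 then 1 else 0) + (if grayγ a ≠ 0 then 1 else 0) = leeW a := by
  revert a; decide

/-- The Hamming weight of the Gray image equals the Lee weight. -/
theorem hammingNorm_gray {n : ℕ} (x : Fin n → ZMod 4) :
    hammingNorm (gray x) = leeWt x := by
  rw [hammingNorm, Finset.card_filter]
  rw [Fintype.sum_sum_type]
  simp only [gray, Sum.elim_inl, Sum.elim_inr, leeWt]
  rw [← Finset.sum_add_distrib]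
  exact Finset.sum_congr rfl fun i _ => leeW_split (x i)
end

section
/- Let C, D ⊆ ℤ₄ⁿ be linear quaternary codes with minimum Lee distances d_C and d_D respectively, with d_D ≥ d_C, and suppose 0 ∈ C, 0 ∈ D. Then the Plotkin construction P = {(x, x+y) : x ∈ C, y ∈ D} has minimum Lee distance min(2·d_C, d_D). -/
/-- The Plotkin (doubling) construction {(x, x+y) : x ∈ C, y ∈ D}. -/
def plotkin {n : ℕ} (C D : Set (Fin n → ZMod 4)) : Set (Fin n ⊕ Fin n → ZMod 4) :=
  {z | ∃ x ∈ C, ∃ y ∈ D, z = Sum.elim x (x + y)}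


lemma leeW_tri : ∀ a b : ZMod 4, leeW b ≤ leeW a + leeW (a + b) := by decide

lemma leeWt_elim {n : ℕ} (u v : Fin n → ZMod 4) :
    leeWt (Sum.elim u v) = leeWt u + leeWt v := by
  simp [leeWt, Fintype.sum_sum_type]

/-- The minimum Lee distance of the Plotkin construction of linear codes with minimum
Lee distances d_C ≤ d_D equals min(2 d_C, d_D). -/
theorem plotkin_minDist {n : ℕ} (C D : Submodule (ZMod 4) (Fin n → ZMod 4))
    (dC dD : ℕ)
    (hC : IsLeast {w | ∃ x ∈ C, x ≠ 0 ∧ w = leeWt x} dC)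
    (hD : IsLeast {w | ∃ y ∈ D, y ≠ 0 ∧ w = leeWt y} dD)
    (hle : dC ≤ dD) :
    IsLeast {w | ∃ z ∈ plotkin (n := n) (C : Set _) (D : Set _), z ≠ 0 ∧ w = leeWt z}
      (min (2 * dC) dD) := by
  obtain ⟨⟨x₀, hx₀C, hx₀ne, hx₀w⟩, hClb⟩ := hC
  obtain ⟨⟨y₀, hy₀D, hy₀ne, hy₀w⟩, hDlb⟩ := hD
  constructor
  · rcases le_or_gt (2 * dC) dD with h | h
    · refine ⟨Sum.elim x₀ (x₀ + 0), ⟨x₀, hx₀C, 0, D.zero_mem, rfl⟩, ?_, ?_⟩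
      · intro hz
        apply hx₀ne
        funext i
        have := congrFun hz (Sum.inl i)
        simpa using this
      · rw [min_eq_left h, leeWt_elim]
        simp [← hx₀w, two_mul]
    · refine ⟨Sum.elim 0 (0 + y₀), ⟨0, C.zero_mem, y₀, hy₀D, rfl⟩, ?_, ?_⟩
      · intro hz
        apply hy₀ne
        funext i
        have := congrFun hz (Sum.inr i)
        simpa using this
      · have h0 : leeWt (0 : Fin n → ZMod 4) = 0 := by simp [leeWt, leeW]
        rw [min_eq_right h.le, leeWt_elim, zero_add, h0, zero_add, hy₀w]
  · rintro w ⟨z, ⟨x, hx, y, hy, rfl⟩, hzne, rfl⟩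
    rw [leeWt_elim]
    by_cases hy0 : y = 0
    · subst hy0
      have hxne : x ≠ 0 := by
        intro h; apply hzne; subst h; funext i; cases i <;> simp
      have hdc : dC ≤ leeWt x := hClb ⟨x, hx, hxne, rfl⟩
      have : leeWt (x + 0) = leeWt x := by rw [add_zero]
      calc min (2*dC) dD ≤ 2*dC := min_le_left _ _
        _ ≤ leeWt x + leeWt (x + 0) := by rw [this]; omega
    · have hd : dD ≤ leeWt y := hDlb ⟨y, hy, hy0, rfl⟩
      have tri : leeWt y ≤ leeWt x + leeWt (x + y) := by
        unfold leeWt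
        rw [← Finset.sum_add_distrib]
        exact Finset.sum_le_sum fun i _ => leeW_tri (x i) (y i)
      calc min (2*dC) dD ≤ dD := min_le_right _ _
        _ ≤ _ := le_trans hd tri
end

section
/- Define ℤ₄-linear codes LRM(r,m) for 0 ≤ r ≤ m recursively: LRM(0,1) = {(0),(2)} ⊆ ℤ₄¹, LRM(1,1) = ℤ₄¹, and LRM(r,m) = {(x, x+y) : x ∈ LRM(r, m−1), y ∈ LRM(r−1, m−1)} (with LRM(−1,m) interpreted as the zero code and LRM(m,m)=ℤ₄^{2^{m−1}}). Then for all 0 ≤ r ≤ m, LRM(r,m) is a ℤ₄-submodule of ℤ₄^{2^{m−1}} of cardinality 2^k where k = Σ_{i=0}^{r} C(m,i). -/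
/-- `LRM r m` is the quaternary code `𝓛𝓡𝓜(r, m+1)` of the paper, of length `2^m`,
with coordinates indexed by `Fin m → ZMod 2`.  `LRM 0 0 = {0, (2)}`, `LRM (r+1) 0 = ℤ₄`,
and for m ≥ 1 it is given by the Plotkin construction
`{(x, x+y) : x ∈ LRM r m, y ∈ LRM (r-1) m}`, where `LRM (-1) m` is read as the zero
code (giving the repetition-style case `r = 0`). -/
def LRM : ℕ → (m : ℕ) → Set ((Fin m → ZMod 2) → ZMod 4)
  | 0, 0 => {0, fun _ => 2}
  | _ + 1, 0 => Set.univ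
  | 0, m + 1 => {z | ∃ x ∈ LRM 0 m, z = fun v => x (Fin.init v)}
  | r + 1, m + 1 => {z | ∃ x ∈ LRM (r + 1) m, ∃ y ∈ LRM r m,
      z = fun v => if v (Fin.last m) = 0 then x (Fin.init v)
                   else x (Fin.init v) + y (Fin.init v)}

lemma sum_choose_saturate (n r : ℕ) (h : n ≤ r) :
    ∑ i ∈ Finset.range (r + 1), n.choose i = 2 ^ n := by
  rw [← Nat.sum_range_choose n]
  symm
  apply Finset.sum_subset
  · intro i hi
    simp only [Finset.mem_range] at hi ⊢
    omega
  · intro i _ hi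
    simp only [Finset.mem_range, not_lt] at hi
    exact Nat.choose_eq_zero_of_lt (by omega)

lemma pascal_sum (m r : ℕ) :
    ∑ i ∈ Finset.range (r + 2), (m + 2).choose i =
      (∑ i ∈ Finset.range (r + 2), (m + 1).choose i) +
      (∑ i ∈ Finset.range (r + 1), (m + 1).choose i) := by
  induction r with
  | zero => simp [Finset.sum_range_succ]; omega
  | succ r ih =>
      rw [Finset.sum_range_succ, ih, Finset.sum_range_succ (n := r + 2),
        Finset.sum_range_succ (n := r + 1), Nat.choose_succ_succ (m + 1)]
      ring

lemma ncard_prod' {α β : Type*} (s : Set α) (t : Set β) :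
    (s ×ˢ t).ncard = s.ncard * t.ncard := by
  rw [← Nat.card_coe_set_eq, ← Nat.card_coe_set_eq, ← Nat.card_coe_set_eq,
    Nat.card_congr (Equiv.Set.prod s t), Nat.card_prod]

def plotkinMap (m : ℕ) :
    (((Fin m → ZMod 2) → ZMod 4) × ((Fin m → ZMod 2) → ZMod 4)) →ₗ[ZMod 4]
      ((Fin (m + 1) → ZMod 2) → ZMod 4) where
  toFun p := fun v => p.1 (Fin.init v) + if v (Fin.last m) = 0 then 0 else p.2 (Fin.init v)
  map_add' p q := by
    funext v
    by_cases h : v (Fin.last m) = 0 <;> simp [h] <;> ring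
  map_smul' c p := by
    funext v
    by_cases h : v (Fin.last m) = 0 <;> simp [h] <;> ring

lemma plotkinMap_injective (m : ℕ) : Function.Injective (plotkinMap m) := by
  intro p q h
  have h0 : ∀ u : Fin m → ZMod 2, p.1 u = q.1 u := by
    intro u
    have := congrFun h (Fin.snoc u 0)
    simpa [plotkinMap, Fin.init_snoc, Fin.snoc_last] using this
  have h1 : ∀ u : Fin m → ZMod 2, p.2 u = q.2 u := by
    intro u
    have := congrFun h (Fin.snoc u 1)
    simp [plotkinMap, Fin.init_snoc, Fin.snoc_last, h0 u] at this
    exact this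
  exact Prod.ext (funext h0) (funext h1)

def initMap (m : ℕ) :
    ((Fin m → ZMod 2) → ZMod 4) →ₗ[ZMod 4] ((Fin (m + 1) → ZMod 2) → ZMod 4) :=
  LinearMap.funLeft (ZMod 4) (ZMod 4) Fin.init

lemma init_surj (m : ℕ) : Function.Surjective (Fin.init : (Fin (m+1) → ZMod 2) → _) :=
  fun u => ⟨Fin.snoc u 0, Fin.init_snoc _ _⟩

lemma initMap_injective (m : ℕ) : Function.Injective (initMap m) :=
  LinearMap.funLeft_injective_of_surjective _ _ _ (init_surj m)

lemma LRM_zero_succ (m : ℕ) : LRM 0 (m + 1) = initMap m '' LRM 0 m := by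
  ext z
  simp only [LRM, Set.mem_setOf_eq, Set.mem_image]
  constructor
  · rintro ⟨x, hx, rfl⟩; exact ⟨x, hx, rfl⟩
  · rintro ⟨x, hx, rfl⟩; exact ⟨x, hx, rfl⟩

lemma LRM_succ_succ (r m : ℕ) :
    LRM (r + 1) (m + 1) = plotkinMap m '' (LRM (r + 1) m ×ˢ LRM r m) := by
  ext z
  simp only [LRM, Set.mem_setOf_eq, Set.mem_image, Set.mem_prod, Prod.exists]
  constructor
  · rintro ⟨x, hx, y, hy, rfl⟩
    refine ⟨x, y, ⟨hx, hy⟩, ?_⟩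
    funext v
    by_cases h : v (Fin.last m) = 0 <;> simp [plotkinMap, h]
  · rintro ⟨x, y, ⟨hx, hy⟩, rfl⟩
    refine ⟨x, hx, y, hy, ?_⟩
    funext v
    by_cases h : v (Fin.last m) = 0 <;> simp [plotkinMap, h]

lemma key : ∀ m r : ℕ,
    ∃ S : Submodule (ZMod 4) ((Fin m → ZMod 2) → ZMod 4),
      (S : Set ((Fin m → ZMod 2) → ZMod 4)) = LRM r m ∧
      (LRM r m).ncard = 2 ^ (∑ i ∈ Finset.range (r + 1), (m + 1).choose i) := by
  intro m
  induction m with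
  | zero =>
      intro r
      match r with
      | 0 =>
          refine ⟨Submodule.span (ZMod 4) {(fun _ => 2 : (Fin 0 → ZMod 2) → ZMod 4)}, ?_, ?_⟩
          · ext z
            rw [SetLike.mem_coe, Submodule.mem_span_singleton]
            constructor
            · rintro ⟨a, rfl⟩
              have : a • (2 : ZMod 4) = 0 ∨ a • (2 : ZMod 4) = 2 := by revert a; decide
              rcases this with h | h
              · left; funext v; simpa using h
              · right; funext v; simpa using h
            · rintro (rfl | rfl)
              · exact ⟨0, by simp⟩
              · exact ⟨1, by simp⟩
          · have hne : (0 : (Fin 0 → ZMod 2) → ZMod 4) ≠ (fun _ => 2) := by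
              intro h
              have := congrFun h (fun i => i.elim0)
              exact absurd this (by decide)
            rw [show LRM 0 0 = {0, fun _ => 2} from rfl, Set.ncard_pair hne]
            decide
      | r + 1 =>
          refine ⟨⊤, by simp [LRM], ?_⟩
          rw [show LRM (r+1) 0 = Set.univ from rfl, Set.ncard_univ,
            Nat.card_eq_fintype_card, sum_choose_saturate 1 (r + 1) (by omega)]
          simp [Fintype.card_fun]
  | succ m ih =>
      intro r
      match r with
      | 0 =>
          obtain ⟨S, hS, hcard⟩ := ih 0
          refine ⟨S.map (initMap m), ?_, ?_⟩
          · rw [Submodule.map_coe, hS, LRM_zero_succ]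
          · rw [LRM_zero_succ, Set.ncard_image_of_injective _ (initMap_injective m), hcard]
            simp
      | r + 1 =>
          obtain ⟨S1, hS1, hc1⟩ := ih (r + 1)
          obtain ⟨S2, hS2, hc2⟩ := ih r
          refine ⟨(S1.prod S2).map (plotkinMap m), ?_, ?_⟩
          · rw [Submodule.map_coe, Submodule.prod_coe, hS1, hS2, LRM_succ_succ]
          · rw [LRM_succ_succ, Set.ncard_image_of_injective _ (plotkinMap_injective m),
              ncard_prod', hc1, hc2, ← pow_add, pascal_sum]


/-- For 0 ≤ r ≤ m (here the paper's `m` is `m+1`), `LRM(r,m)` is a ℤ₄-submodule of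
ℤ₄^{2^{m-1}} of cardinality 2^k, k = ∑_{i=0}^r C(m,i). -/
theorem LRM_submodule_card (m r : ℕ) (hr : r ≤ m + 1) :
    ∃ S : Submodule (ZMod 4) ((Fin m → ZMod 2) → ZMod 4),
      (S : Set ((Fin m → ZMod 2) → ZMod 4)) = LRM r m ∧
      (LRM r m).ncard = 2 ^ (∑ i ∈ Finset.range (r + 1), (m + 1).choose i) := by
  exact key m r
end

section
/- The binary Reed–Muller code RM(r,m) has minimum Hamming distance exactly 2^{m−r}, for 0 ≤ r ≤ m. -/
/-- The binary Reed–Muller code RM(r,m): the span of evaluation vectors of all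
monomials of degree ≤ r in m Boolean variables, with coordinates indexed by the
points of ℤ₂^m. -/
def RM (r m : ℕ) : Submodule (ZMod 2) ((Fin m → ZMod 2) → ZMod 2) :=
  Submodule.span (ZMod 2)
    {f | ∃ S : Finset (Fin m), S.card ≤ r ∧ f = fun v => ∏ i ∈ S, v i}

/-! Restricting a codeword of RM(r+1, m+1) to the hyperplanes x₀ = 0 and x₀ = 1 writes it as
(u | u + v) with u ∈ RM(r+1, m) and v ∈ RM(r, m). If v = 0 its weight is 2·wt(u), otherwise it
is at least wt(v), so induction on m gives the lower bound 2^(m-r); a monomial of degree r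
attains it. -/

open Finset

section Hamming

variable {ι β : Type*} [Fintype ι] [DecidableEq β]

lemma hammingNorm_sub_le [AddGroup β] (x y : ι → β) :
    hammingNorm (x - y) ≤ hammingNorm x + hammingNorm y := by
  calc hammingNorm (x - y) = hammingDist x y := by
        simp only [hammingNorm, hammingDist, Pi.sub_apply, sub_ne_zero]
    _ ≤ hammingDist x 0 + hammingDist 0 y := hammingDist_triangle x 0 y
    _ = hammingNorm x + hammingNorm y := by
        rw [hammingDist_zero_right, hammingDist_comm, hammingDist_zero_right]

lemma hammingNorm_const [Zero β] {c : β} (hc : c ≠ 0) :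
    hammingNorm (fun _ : ι => c) = Fintype.card ι := by
  simp [hammingNorm, hc]

lemma hammingNorm_eq_sum_cons {α : Type*} [Fintype α] [Zero β] {m : ℕ}
    (z : (Fin (m + 1) → α) → β) :
    hammingNorm z = ∑ a, hammingNorm (fun v => z (Fin.cons a v)) := by
  simp only [hammingNorm, card_filter]
  rw [← (Fin.consEquiv fun _ => α).sum_comp, Fintype.sum_prod_type]
  rfl

end Hamming

lemma prod_cons_eq_ite_mul_prod {M : Type*} [CommMonoid M] {m : ℕ} (S : Finset (Fin (m + 1)))
    (b : M) (v : Fin m → M) :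
    ∏ i ∈ S, (Fin.cons b v : Fin (m + 1) → M) i =
      (if 0 ∈ S then b else 1) * ∏ j ∈ {j | j.succ ∈ S}, v j := by
  rw [← univ_inter S, ← prod_ite_mem, Fin.prod_univ_succ, prod_filter]
  simp

lemma card_filter_succ_mem {m : ℕ} (S : Finset (Fin (m + 1))) :
    #{j : Fin m | j.succ ∈ S} + (if 0 ∈ S then 1 else 0) = #S := by
  conv_rhs => rw [← filter_univ_mem S, Fin.card_filter_univ_succ']
  omega

lemma hammingNorm_prod_zmod_two {ι : Type*} [Fintype ι] [DecidableEq ι] (S : Finset ι) :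
    hammingNorm (fun v : ι → ZMod 2 => ∏ i ∈ S, v i) = 2 ^ (Fintype.card ι - #S) := by
  have hunit : ∀ a : ZMod 2, a ≠ 0 ↔ a = 1 := by decide
  have hsupp : ({v | ∏ i ∈ S, v i ≠ 0} : Finset (ι → ZMod 2)) =
      Fintype.piFinset fun i => if i ∈ S then {1} else univ := by
    ext v
    simp only [mem_filter, mem_univ, true_and, prod_ne_zero_iff, Fintype.mem_piFinset]
    refine forall_congr' fun i => ?_
    split_ifs with hi <;> simp [hi, hunit]
  rw [hammingNorm, hsupp, Fintype.card_piFinset, ← card_compl]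
  simp only [apply_ite card, card_singleton, card_univ, ZMod.card]
  rw [prod_ite]
  simp [filter_not, compl_eq_univ_sdiff]

section ReedMuller

variable {m r : ℕ}

lemma prod_mem_RM {S : Finset (Fin m)} (hS : #S ≤ r) : (fun v => ∏ i ∈ S, v i) ∈ RM r m :=
  Submodule.subset_span ⟨S, hS, rfl⟩

lemma RM_le_comap {m' r' : ℕ}
    (f : ((Fin m → ZMod 2) → ZMod 2) →ₗ[ZMod 2] (Fin m' → ZMod 2) → ZMod 2)
    (hf : ∀ S : Finset (Fin m), #S ≤ r → f (fun v => ∏ i ∈ S, v i) ∈ RM r' m') :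
    RM r m ≤ (RM r' m').comap f :=
  Submodule.span_le.mpr <| by
    rintro _ ⟨S, hS, rfl⟩
    exact hf S hS

def restrictCons (b : ZMod 2) :
    ((Fin (m + 1) → ZMod 2) → ZMod 2) →ₗ[ZMod 2] (Fin m → ZMod 2) → ZMod 2 :=
  LinearMap.funLeft _ _ (Fin.cons b ·)

lemma restrictCons_prod (b : ZMod 2) (S : Finset (Fin (m + 1))) :
    restrictCons b (fun v => ∏ i ∈ S, v i) =
      (if 0 ∈ S then b else 1) • fun v : Fin m → ZMod 2 => ∏ j ∈ {j | j.succ ∈ S}, v j := by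
  ext v
  exact prod_cons_eq_ite_mul_prod S b v

lemma restrictCons_mem_RM (b : ZMod 2) {z : (Fin (m + 1) → ZMod 2) → ZMod 2}
    (hz : z ∈ RM r (m + 1)) : restrictCons b z ∈ RM r m := by
  refine RM_le_comap _ (fun S hS => ?_) hz
  rw [restrictCons_prod]
  refine Submodule.smul_mem _ _ (prod_mem_RM ?_)
  have := card_filter_succ_mem S
  omega

lemma restrictCons_one_sub_restrictCons_zero_mem_RM {z : (Fin (m + 1) → ZMod 2) → ZMod 2}
    (hz : z ∈ RM (r + 1) (m + 1)) : restrictCons 1 z - restrictCons 0 z ∈ RM r m := by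
  refine RM_le_comap (restrictCons 1 - restrictCons 0) (fun S hS => ?_) hz
  rw [LinearMap.sub_apply, restrictCons_prod, restrictCons_prod, ← sub_smul]
  have := card_filter_succ_mem S
  split_ifs at this ⊢
  · exact Submodule.smul_mem _ _ (prod_mem_RM (by omega))
  · rw [sub_self, zero_smul]
    exact Submodule.zero_mem _

lemma eq_const_of_mem_RM_zero {z : (Fin m → ZMod 2) → ZMod 2} (hz : z ∈ RM 0 m) :
    ∃ c, z = fun _ => c := by
  have hle : RM 0 m ≤ Submodule.span (ZMod 2) {1} := by
    refine Submodule.span_mono ?_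
    rintro _ ⟨S, hS, rfl⟩
    obtain rfl := card_eq_zero.mp (Nat.le_zero.mp hS)
    exact funext fun _ => prod_empty
  obtain ⟨c, rfl⟩ := Submodule.mem_span_singleton.mp (hle hz)
  exact ⟨c, by ext; simp⟩

lemma hammingNorm_eq_restrictCons_add (z : (Fin (m + 1) → ZMod 2) → ZMod 2) :
    hammingNorm z = hammingNorm (restrictCons 0 z) + hammingNorm (restrictCons 1 z) :=
  (hammingNorm_eq_sum_cons z).trans (Fin.sum_univ_two _)

end ReedMuller

theorem two_pow_le_hammingNorm_of_mem_RM :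
    ∀ {m r : ℕ} {z : (Fin m → ZMod 2) → ZMod 2}, z ∈ RM r m → z ≠ 0 →
      2 ^ (m - r) ≤ hammingNorm z
  | 0, _, _, _, hz0 => by simpa [Nat.one_le_iff_ne_zero] using hz0
  | m + 1, 0, z, hz, hz0 => by
    obtain ⟨c, rfl⟩ := eq_const_of_mem_RM_zero hz
    have hc : c ≠ 0 := fun h => hz0 (funext fun _ => h)
    simp [hammingNorm_const hc]
  | m + 1, r + 1, z, hz, hz0 => by
    have hsplit := hammingNorm_eq_restrictCons_add z
    by_cases hslices : restrictCons 1 z = restrictCons 0 z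
    · have hz₀ : restrictCons 0 z ≠ 0 := by
        intro h
        have hpos := hammingNorm_pos_iff.mpr hz0
        simp [hsplit, hslices, h] at hpos
      have ih := two_pow_le_hammingNorm_of_mem_RM (restrictCons_mem_RM 0 hz) hz₀
      calc 2 ^ (m + 1 - (r + 1)) ≤ 2 ^ (m - (r + 1) + 1) :=
            Nat.pow_le_pow_right two_pos (by omega)
        _ ≤ hammingNorm z := by rw [hsplit, hslices, pow_succ]; omega
    · have hd := restrictCons_one_sub_restrictCons_zero_mem_RM hz
      have ih := two_pow_le_hammingNorm_of_mem_RM hd (sub_ne_zero.mpr hslices)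
      calc 2 ^ (m + 1 - (r + 1)) = 2 ^ (m - r) := by rw [Nat.add_sub_add_right]
        _ ≤ hammingNorm (restrictCons 1 z) + hammingNorm (restrictCons 0 z) :=
          ih.trans (hammingNorm_sub_le _ _)
        _ = hammingNorm z := by rw [hsplit, add_comm]

/-- RM(r,m) has minimum Hamming distance exactly 2^{m-r}. -/
theorem RM_minDist (m r : ℕ) (hr : r ≤ m) :
    IsLeast {w | ∃ z ∈ RM r m, z ≠ 0 ∧ w = hammingNorm z} (2 ^ (m - r)) := by
  obtain ⟨S, -, hS⟩ := exists_subset_card_eq (s := (univ : Finset (Fin m))) (by simpa using hr)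
  have hweight : hammingNorm (fun v : Fin m → ZMod 2 => ∏ i ∈ S, v i) = 2 ^ (m - r) := by
    rw [hammingNorm_prod_zmod_two, Fintype.card_fin, hS]
  refine ⟨⟨_, prod_mem_RM hS.le, ?_, hweight.symm⟩, ?_⟩
  · rw [← hammingNorm_pos_iff, hweight]
    positivity
  · rintro _ ⟨z, hz, hz0, rfl⟩
    exact two_pow_le_hammingNorm_of_mem_RM hz hz0
end
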